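/- arXiv:1806.05044 — 3 statements merged into one kernel-verified Lean document; each statement's English description precedes it below -/
import Mathlib

section
/- Let A = K[[f_1,…,f_s]] ⊆ F = K[[x_1,…,x_n]] with the length of F/A as an A-module finite. Then the set {in(A,a) : a ∈ (ℝ_{>0})^n} of subalgebras of F is finite. -/
noncomputable section

namespace CanonicalFan

open MvPowerSeries

variable (K : Type*) [Field K] (n : ℕ)

/-- The weight `⟨a, α⟩ = ∑ i, a i * α i` of an exponent `α` with respect to `a`. -/
def weight (a : Fin n → ℝ) (α : Fin n →₀ ℕ) : ℝ := ∑ i, a i * (α i : ℝ)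

/-- The support of a formal power series. -/
def supp (f : MvPowerSeries (Fin n) K) : Set (Fin n →₀ ℕ) :=
  {α | MvPowerSeries.coeff α f ≠ 0}

/-- The `a`-valuation `ν(f,a)`, with the convention `ν(0,a) = +∞`. -/
def nu (a : Fin n → ℝ) (f : MvPowerSeries (Fin n) K) : EReal :=
  sInf ((fun α => ((weight n a α : ℝ) : EReal)) '' supp K n f)

open Classical in
/-- The `a`-initial form `in(f,a)` of a power series. -/
def initialForm (a : Fin n → ℝ) (f : MvPowerSeries (Fin n) K) :
    MvPowerSeries (Fin n) K :=
  fun α => if ((weight n a α : ℝ) : EReal) = nu K n a f then MvPowerSeries.coeff α f else 0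

open Classical in
/-- `exp(f,a)`: the `≺`-maximal element of the support of `in(f,a)`, where `≺` is the
well-ordering `r` (junk value `0` if no maximal element exists). -/
def exponent (r : (Fin n →₀ ℕ) → (Fin n →₀ ℕ) → Prop) (a : Fin n → ℝ)
    (f : MvPowerSeries (Fin n) K) : Fin n →₀ ℕ :=
  if h : ∃ β ∈ supp K n (initialForm K n a f),
      ∀ γ ∈ supp K n (initialForm K n a f), γ = β ∨ r γ β
  then h.choose else 0

/-- The `a`-leading monomial `M(f,a) = c_{exp(f,a)} x^{exp(f,a)}`. -/
def leadMon (r : (Fin n →₀ ℕ) → (Fin n →₀ ℕ) → Prop) (a : Fin n → ℝ)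
    (f : MvPowerSeries (Fin n) K) : MvPowerSeries (Fin n) K :=
  MvPowerSeries.monomial (exponent K n r a f)
    (MvPowerSeries.coeff (exponent K n r a f) f)

/-- The maximal ideal `(x_1, …, x_n)` of `K[[x_1,…,x_n]]`. -/
def mIdeal : Ideal (MvPowerSeries (Fin n) K) :=
  Ideal.span (Set.range (MvPowerSeries.X : Fin n → MvPowerSeries (Fin n) K))

/-- `K[[S]]`: the smallest `K`-subalgebra of `K[[x_1,…,x_n]]` containing `S` and closed in
the `(x_1,…,x_n)`-adic topology; concretely, the adic closure of `Algebra.adjoin K S`. -/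
def closedAdjoin (S : Set (MvPowerSeries (Fin n) K)) :
    Subalgebra K (MvPowerSeries (Fin n) K) where
  carrier := {f | ∀ N : ℕ, ∃ g ∈ Algebra.adjoin K S, f - g ∈ (mIdeal K n) ^ N}
  algebraMap_mem' c N :=
    ⟨algebraMap K _ c, Subalgebra.algebraMap_mem _ c, by simp [Ideal.zero_mem]⟩
  add_mem' {f g} hf hg N := by
    obtain ⟨p, hp, hfp⟩ := hf N
    obtain ⟨q, hq, hgq⟩ := hg N
    exact ⟨p + q, add_mem hp hq, by simpa [add_sub_add_comm] using Ideal.add_mem _ hfp hgq⟩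
  mul_mem' {f g} hf hg N := by
    obtain ⟨p, hp, hfp⟩ := hf N
    obtain ⟨q, hq, hgq⟩ := hg N
    refine ⟨p * q, mul_mem hp hq, ?_⟩
    have h : f * g - p * q = f * (g - q) + (f - p) * q := by ring
    rw [h]
    exact Ideal.add_mem _ (Ideal.mul_mem_left _ _ hgq) (Ideal.mul_mem_right _ _ hfp)

/-- `exp(A,a) = {exp(f,a) : f ∈ A, f ≠ 0}`. -/
def expSet (r : (Fin n →₀ ℕ) → (Fin n →₀ ℕ) → Prop) (a : Fin n → ℝ)
    (A : Set (MvPowerSeries (Fin n) K)) : Set (Fin n →₀ ℕ) :=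
  {β | ∃ f ∈ A, f ≠ 0 ∧ exponent K n r a f = β}

/-- `in(A,a) = K[[in(f,a) : f ∈ A ∖ {0}]]`. -/
def inAlgebra (a : Fin n → ℝ) (A : Set (MvPowerSeries (Fin n) K)) :
    Subalgebra K (MvPowerSeries (Fin n) K) :=
  closedAdjoin K n {g | ∃ f ∈ A, f ≠ 0 ∧ initialForm K n a f = g}

/-- `M(A,a) = K[[M(f,a) : f ∈ A ∖ {0}]]`. -/
def leadAlgebra (r : (Fin n →₀ ℕ) → (Fin n →₀ ℕ) → Prop) (a : Fin n → ℝ)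
    (A : Set (MvPowerSeries (Fin n) K)) : Subalgebra K (MvPowerSeries (Fin n) K) :=
  closedAdjoin K n {g | ∃ f ∈ A, f ≠ 0 ∧ leadMon K n r a f = g}

set_option synthInstance.maxHeartbeats 1000000 in
/-- The length of `F/A` as an `A`-module is finite. -/
def FiniteColength (A : Subalgebra K (MvPowerSeries (Fin n) K)) : Prop :=
  IsFiniteLength A
    (MvPowerSeries (Fin n) K ⧸ LinearMap.range (Algebra.linearMap A (MvPowerSeries (Fin n) K)))

/-- `{g_1,…,g_r}` is an `a`-canonical basis of `A`. -/
def IsCanonicalBasis (r : (Fin n →₀ ℕ) → (Fin n →₀ ℕ) → Prop) (a : Fin n → ℝ)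
    (A : Subalgebra K (MvPowerSeries (Fin n) K)) {m : ℕ}
    (g : Fin m → MvPowerSeries (Fin n) K) : Prop :=
  (∀ i, g i ∈ A ∧ g i ≠ 0) ∧
    leadAlgebra K n r a (A : Set (MvPowerSeries (Fin n) K)) =
      closedAdjoin K n (Set.range fun i => leadMon K n r a (g i))

/-- `{g_1,…,g_r}` is a minimal `a`-canonical basis of `A`. -/
def IsMinimalCanonicalBasis (r : (Fin n →₀ ℕ) → (Fin n →₀ ℕ) → Prop) (a : Fin n → ℝ)
    (A : Subalgebra K (MvPowerSeries (Fin n) K)) {m : ℕ}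
    (g : Fin m → MvPowerSeries (Fin n) K) : Prop :=
  IsCanonicalBasis K n r a A g ∧
    ∀ T : Set (MvPowerSeries (Fin n) K),
      T ⊂ Set.range (fun i => leadMon K n r a (g i)) →
        closedAdjoin K n T ≠ leadAlgebra K n r a (A : Set (MvPowerSeries (Fin n) K))

/-- `{g_1,…,g_r}` is the `a`-reduced canonical basis of `A`. -/
def IsReducedCanonicalBasis (r : (Fin n →₀ ℕ) → (Fin n →₀ ℕ) → Prop) (a : Fin n → ℝ)
    (A : Subalgebra K (MvPowerSeries (Fin n) K)) {m : ℕ}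
    (g : Fin m → MvPowerSeries (Fin n) K) : Prop :=
  IsMinimalCanonicalBasis K n r a A g ∧
    (∀ i, MvPowerSeries.coeff (exponent K n r a (g i)) (g i) = 1) ∧
    ∀ i, ∀ α ∈ supp K n (g i - leadMon K n r a (g i)),
      (MvPowerSeries.monomial α (1 : K)) ∉
        closedAdjoin K n (Set.range fun j => leadMon K n r a (g j))

/-- A power series is a (nonzero) monomial. -/
def IsMonomial (g : MvPowerSeries (Fin n) K) : Prop :=
  ∃ (α : Fin n →₀ ℕ) (c : K), c ≠ 0 ∧ g = MvPowerSeries.monomial α c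

/-!
If `F/A` has finite length, the images of the powers `𝔪^k` in `F/A` stabilise, and since `A` is
adically closed this gives `𝔪^N ⊆ A` for some `N`; then also `𝔪^N ⊆ in(A,a)` for every `a`.
Modulo `𝔪^N`, an initial form `in(f,a)` with `f ∈ A` is either `0` or the initial form of the
truncation of `f` below degree `N`, which again lies in `A`. Hence `in(A,a)` depends only on how
`a` orders the finitely many exponents of degree `< N` by weight, and there are finitely many
such orderings.
-/

open Finsupp in
theorem _root_.MvPowerSeries.exists_eq_sum_X_mul {σ R : Type*} [CommSemiring R] [LinearOrder σ]
    [Fintype σ] {f : MvPowerSeries σ R}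
    (hf : constantCoeff f = 0) :
    ∃ g : σ → MvPowerSeries σ R, f = ∑ i, X i * g i ∧
      ∀ i γ, coeff (γ + single i 1) f = 0 → coeff γ (g i) = 0 := by
  classical
  -- `g i` collects the terms of `f` whose smallest variable is `i`, divided by `X i`.
  set g : σ → MvPowerSeries σ R := fun i γ =>
    if (γ + single i 1).support.min = (i : WithTop σ) then coeff (γ + single i 1) f else 0
  have hg (i γ) : coeff γ (g i) =
      if (γ + single i 1).support.min = (i : WithTop σ) then coeff (γ + single i 1) f else 0 :=
    rfl
  refine ⟨g, ?_, fun i γ h => by simp [hg, h]⟩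
  ext α
  have hterm (i : σ) :
      coeff α (X i * g i) = if α.support.min = (i : WithTop σ) then coeff α f else 0 := by
    rw [X_def, coeff_monomial_mul, hg]
    by_cases h1 : single i 1 ≤ α
    · simp [h1, tsub_add_cancel_of_le h1]
    · have : α.support.min ≠ i := fun h =>
        h1 (by simpa [Nat.one_le_iff_ne_zero] using Finset.mem_of_min h)
      simp [h1, this]
  rw [map_sum, Finset.sum_congr rfl fun i _ => hterm i]
  rcases α.support.eq_empty_or_nonempty with h | h
  · simp_all [Finsupp.support_eq_empty.1 h]
  · simp [← Finset.coe_min' h]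

theorem _root_.Submodule.exists_le_sup_of_antitone {R M : Type*} [Ring R] [AddCommGroup M]
    [Module R M] (q : Submodule R M) [IsArtinian R (M ⧸ q)] {p : ℕ → Submodule R M}
    (hp : Antitone p) : ∃ N, ∀ k, p N ≤ q ⊔ p k := by
  obtain ⟨N, hN⟩ := IsArtinian.monotone_stabilizes
    ⟨fun k => OrderDual.toDual ((p k).map q.mkQ), fun _ _ h => Submodule.map_mono (hp h)⟩
  refine ⟨N, fun k => ?_⟩
  rcases le_total k N with hk | hk
  · exact (hp hk).trans le_sup_right
  · rw [← Submodule.comap_map_mkQ]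
    exact Submodule.le_comap_map _ _ |>.trans_eq (congrArg _ (hN k hk))

theorem _root_.Set.finite_range_of_factorsThrough {α β γ : Type*} {g : α → β} {h : α → γ}
    (hg : Function.FactorsThrough g h) (hh : (Set.range h).Finite) : (Set.range g).Finite := by
  have := hh.to_subtype
  refine (Set.finite_range fun c : Set.range h => g c.2.choose).subset ?_
  rintro _ ⟨a, rfl⟩
  exact ⟨⟨h a, a, rfl⟩, hg (Exists.choose_spec (⟨a, rfl⟩ : ∃ b, h b = h a))⟩

section

variable {K n}

theorem mIdeal_le_ker_constantCoeff : mIdeal K n ≤ RingHom.ker constantCoeff :=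
  Ideal.span_le.2 <| by rintro _ ⟨i, rfl⟩; simp

theorem mem_mIdeal_pow_iff {M : ℕ} {f : MvPowerSeries (Fin n) K} :
    f ∈ mIdeal K n ^ M ↔ (M : ℕ∞) ≤ f.order := by
  induction M generalizing f with
  | zero => simp
  | succ M ih =>
    constructor
    · intro hf
      rw [pow_succ] at hf
      refine Submodule.mul_induction_on hf (fun g hg h hh => ?_) fun g h hg hh => ?_
      · calc ((M + 1 : ℕ) : ℕ∞) ≤ g.order + h.order := by
              push_cast
              exact add_le_add (ih.1 hg)
                (one_le_order_iff_constCoeff_eq_zero.2 (mIdeal_le_ker_constantCoeff hh))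
          _ ≤ (g * h).order := le_order_mul
      · exact (le_min hg hh).trans min_order_le_add
    · intro hf
      obtain ⟨g, rfl, hg⟩ := exists_eq_sum_X_mul
        (one_le_order_iff_constCoeff_eq_zero.1 (le_trans (by simp) hf))
      rw [pow_succ']
      refine Ideal.sum_mem _ fun i _ => Ideal.mul_mem_mul (Ideal.subset_span ⟨i, rfl⟩) ?_
      refine ih.2 (nat_le_order fun d hd => hg i d (coeff_of_lt_order ?_))
      rw [map_add, Finsupp.degree_single]
      exact lt_of_lt_of_le (by exact_mod_cast Nat.add_lt_add_right hd 1) hf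

theorem mem_mIdeal_pow_iff_coeff {M : ℕ} {f : MvPowerSeries (Fin n) K} :
    f ∈ mIdeal K n ^ M ↔ ∀ α : Fin n →₀ ℕ, α.degree < M → coeff α f = 0 :=
  mem_mIdeal_pow_iff.trans
    ⟨fun h _ hα => coeff_of_lt_order ((Nat.cast_lt.2 hα).trans_le h), nat_le_order⟩

theorem sub_truncTotal_mem_mIdeal_pow (N : ℕ) (f : MvPowerSeries (Fin n) K) :
    f - (truncTotal N f : MvPowerSeries (Fin n) K) ∈ mIdeal K n ^ N :=
  mem_mIdeal_pow_iff_coeff.2 fun α hα => by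
    rw [map_sub, MvPolynomial.coeff_coe, coeff_truncTotal _ hα, sub_self]

theorem monomial_mem_mIdeal_pow {N : ℕ} {α : Fin n →₀ ℕ} (hα : N ≤ α.degree) (c : K) :
    monomial α c ∈ mIdeal K n ^ N := by
  classical
  refine mem_mIdeal_pow_iff_coeff.2 fun β hβ => ?_
  rw [coeff_monomial, if_neg (by rintro rfl; omega)]

theorem subset_closedAdjoin (S : Set (MvPowerSeries (Fin n) K)) : S ⊆ closedAdjoin K n S :=
  fun g hg _ => ⟨g, Algebra.subset_adjoin hg, by simp⟩

theorem mem_closedAdjoin_of_forall_sub_mem {S : Set (MvPowerSeries (Fin n) K)}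
    {f : MvPowerSeries (Fin n) K}
    (h : ∀ N, ∃ g ∈ closedAdjoin K n S, f - g ∈ mIdeal K n ^ N) : f ∈ closedAdjoin K n S := by
  intro N
  obtain ⟨g, hg, hfg⟩ := h N
  obtain ⟨p, hp, hgp⟩ := hg N
  exact ⟨p, hp, by simpa using Ideal.add_mem _ hfg hgp⟩

theorem closedAdjoin_le {S T : Set (MvPowerSeries (Fin n) K)} (h : S ⊆ closedAdjoin K n T) :
    closedAdjoin K n S ≤ closedAdjoin K n T := fun _ hf =>
  mem_closedAdjoin_of_forall_sub_mem fun N =>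
    have ⟨g, hg, hfg⟩ := hf N
    ⟨g, Algebra.adjoin_le h hg, hfg⟩

theorem mem_closedAdjoin_of_monomial_mem {S : Set (MvPowerSeries (Fin n) K)}
    {f : MvPowerSeries (Fin n) K}
    (h : ∀ α, coeff α f ≠ 0 → monomial α 1 ∈ closedAdjoin K n S) : f ∈ closedAdjoin K n S := by
  refine mem_closedAdjoin_of_forall_sub_mem fun N => ⟨_, ?_, sub_truncTotal_mem_mIdeal_pow N f⟩
  rw [← MvPolynomial.coeToMvPowerSeries.ringHom_apply, (truncTotal N f).as_sum, map_sum]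
  refine Subalgebra.sum_mem _ fun α hα => ?_
  have hfα : coeff α f ≠ 0 := fun h0 =>
    MvPolynomial.mem_support_iff.1 hα (by rw [coeff_truncTotal_eq_ite, h0, ite_self])
  rw [MvPolynomial.coeToMvPowerSeries.ringHom_apply, MvPolynomial.coe_monomial,
    ← mul_one (MvPolynomial.coeff α _), ← smul_eq_mul, map_smul]
  exact Subalgebra.smul_mem _ (h α hfα) _

theorem exists_mIdeal_pow_le_closedAdjoin {S : Set (MvPowerSeries (Fin n) K)}
    (hlen : FiniteColength K n (closedAdjoin K n S)) :
    ∃ N, ∀ z ∈ mIdeal K n ^ N, z ∈ closedAdjoin K n S := by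
  have := (isFiniteLength_iff_isNoetherian_isArtinian.1 hlen).2
  obtain ⟨N, hN⟩ := Submodule.exists_le_sup_of_antitone
    (LinearMap.range (Algebra.linearMap (closedAdjoin K n S) (MvPowerSeries (Fin n) K)))
    (p := fun k => (mIdeal K n ^ k).restrictScalars (closedAdjoin K n S))
    fun _ _ h => Ideal.pow_le_pow_right h
  refine ⟨N, fun z hz => mem_closedAdjoin_of_forall_sub_mem fun k => ?_⟩
  obtain ⟨_, ⟨g, rfl⟩, t, ht, rfl⟩ := Submodule.mem_sup.1 (hN k hz)
  exact ⟨g, g.2, by simpa using ht⟩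

theorem coeff_initialForm (a : Fin n → ℝ) (f : MvPowerSeries (Fin n) K) (α : Fin n →₀ ℕ) :
    coeff α (initialForm K n a f) =
      if (weight n a α : EReal) = nu K n a f then coeff α f else 0 := by
  classical
  simp [initialForm, coeff_apply]

theorem initialForm_zero (a : Fin n → ℝ) : initialForm K n a 0 = 0 := by
  ext α
  simp [coeff_initialForm]

theorem nu_le_nu_of_supp_subset (a : Fin n → ℝ) {f g : MvPowerSeries (Fin n) K}
    (h : supp K n g ⊆ supp K n f) : nu K n a f ≤ nu K n a g :=
  sInf_le_sInf (Set.image_mono h)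

theorem weight_eq_nu_iff (a : Fin n → ℝ) {f : MvPowerSeries (Fin n) K} {α : Fin n →₀ ℕ}
    (hα : α ∈ supp K n f) :
    (weight n a α : EReal) = nu K n a f ↔ ∀ β ∈ supp K n f, weight n a α ≤ weight n a β := by
  refine ⟨fun h β hβ => EReal.coe_le_coe_iff.1 (h ▸ sInf_le ⟨β, hβ, rfl⟩), fun h => ?_⟩
  refine Eq.symm (IsLeast.csInf_eq ?_)
  exact ⟨Set.mem_image_of_mem _ hα,
    Set.forall_mem_image.2 fun β hβ => EReal.coe_le_coe_iff.2 (h β hβ)⟩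

theorem initialForm_monomial (a : Fin n → ℝ) (α : Fin n →₀ ℕ) (c : K) :
    initialForm K n a (monomial α c) = monomial α c := by
  classical
  ext β
  rw [coeff_initialForm, coeff_monomial]
  by_cases hβ : β = α
  · subst hβ
    by_cases hc : c = 0
    · simp [hc]
    · rw [if_pos ((weight_eq_nu_iff a (by simp [supp, hc])).2 fun γ hγ => ?_)]
      · simp [supp, coeff_monomial, hc] at hγ
        rw [hγ]
  · simp [hβ]

theorem initialForm_congr_of_weight_le_iff {a a' : Fin n → ℝ} {f : MvPowerSeries (Fin n) K}
    (h : ∀ α ∈ supp K n f, ∀ β ∈ supp K n f,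
      (weight n a α ≤ weight n a β ↔ weight n a' α ≤ weight n a' β)) :
    initialForm K n a f = initialForm K n a' f := by
  ext α
  rw [coeff_initialForm, coeff_initialForm]
  by_cases hα : α ∈ supp K n f
  · refine if_congr ?_ rfl rfl
    rw [weight_eq_nu_iff a hα, weight_eq_nu_iff a' hα]
    exact forall₂_congr fun β hβ => h α hα β hβ
  · simp_all [supp]

theorem initialForm_mem_inAlgebra (a : Fin n → ℝ) {A : Set (MvPowerSeries (Fin n) K)}
    {f : MvPowerSeries (Fin n) K} (hf : f ∈ A) : initialForm K n a f ∈ inAlgebra K n a A := by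
  rcases eq_or_ne f 0 with rfl | hf0
  · rw [initialForm_zero]
    exact zero_mem _
  · exact subset_closedAdjoin _ ⟨f, hf, hf0, rfl⟩

theorem mem_inAlgebra_of_mem_mIdeal_pow (a : Fin n → ℝ) {A : Set (MvPowerSeries (Fin n) K)}
    {N : ℕ} (hN : ∀ z ∈ mIdeal K n ^ N, z ∈ A) {z : MvPowerSeries (Fin n) K}
    (hz : z ∈ mIdeal K n ^ N) : z ∈ inAlgebra K n a A :=
  mem_closedAdjoin_of_monomial_mem fun α hα => by
    have hdeg : N ≤ α.degree := not_lt.1 fun hlt => hα (mem_mIdeal_pow_iff_coeff.1 hz α hlt)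
    have := initialForm_mem_inAlgebra a (hN _ (monomial_mem_mIdeal_pow hdeg (1 : K)))
    rwa [initialForm_monomial] at this

theorem initialForm_mem_inAlgebra_of_weight_le_iff {A : Subalgebra K (MvPowerSeries (Fin n) K)}
    {N : ℕ} (hN : ∀ z ∈ mIdeal K n ^ N, z ∈ A) {a a' : Fin n → ℝ}
    (h : ∀ α β : Fin n →₀ ℕ, α.degree < N → β.degree < N →
      (weight n a α ≤ weight n a β ↔ weight n a' α ≤ weight n a' β))
    {f : MvPowerSeries (Fin n) K} (hf : f ∈ A) :
    initialForm K n a f ∈ inAlgebra K n a' (A : Set (MvPowerSeries (Fin n) K)) := by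
  set p : MvPowerSeries (Fin n) K := ↑(truncTotal N f)
  have hp_coeff (α) : coeff α p = if α.degree < N then coeff α f else 0 := by
    rw [MvPolynomial.coeff_coe, coeff_truncTotal_eq_ite]
  have hp_supp (α) (hα : α ∈ supp K n p) : α.degree < N ∧ α ∈ supp K n f := by
    simpa [supp, hp_coeff, ite_ne_right_iff] using hα
  have hpA : p ∈ A := by simpa using A.sub_mem hf (hN _ (sub_truncTotal_mem_mIdeal_pow N f))
  have hp : initialForm K n a p ∈ inAlgebra K n a' A := by
    rw [initialForm_congr_of_weight_le_iff fun α hα β hβ =>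
      h α β (hp_supp α hα).1 (hp_supp β hβ).1]
    exact initialForm_mem_inAlgebra a' hpA
  have hmN {z} (hz : z ∈ mIdeal K n ^ N) : z ∈ inAlgebra K n a' A :=
    mem_inAlgebra_of_mem_mIdeal_pow a' hN hz
  rcases (nu_le_nu_of_supp_subset a fun α hα => (hp_supp α hα).2).eq_or_lt with heq | hlt
  · -- `in(f,a)` and `in(p,a)` agree in degrees `< N`
    rw [← add_sub_cancel (initialForm K n a p) (initialForm K n a f)]
    refine add_mem hp (hmN (mem_mIdeal_pow_iff_coeff.2 fun α hα => ?_))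
    rw [map_sub, coeff_initialForm, coeff_initialForm, heq, hp_coeff, if_pos hα, sub_self]
  · -- `in(f,a)` has no terms of degree `< N`
    refine hmN (mem_mIdeal_pow_iff_coeff.2 fun α hα => ?_)
    rw [coeff_initialForm, ite_eq_right_iff]
    intro hw
    by_contra hne
    have hαp : α ∈ supp K n p := by simp [supp, hp_coeff, hα, hne]
    exact hlt.not_ge (hw ▸ sInf_le ⟨α, hαp, rfl⟩)

theorem inAlgebra_eq_of_weight_le_iff {A : Subalgebra K (MvPowerSeries (Fin n) K)} {N : ℕ}
    (hN : ∀ z ∈ mIdeal K n ^ N, z ∈ A) {a a' : Fin n → ℝ}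
    (h : ∀ α β : Fin n →₀ ℕ, α.degree < N → β.degree < N →
      (weight n a α ≤ weight n a β ↔ weight n a' α ≤ weight n a' β)) :
    inAlgebra K n a (A : Set (MvPowerSeries (Fin n) K)) = inAlgebra K n a' A := by
  have key (b b' : Fin n → ℝ) (h' : ∀ α β : Fin n →₀ ℕ, α.degree < N → β.degree < N →
      (weight n b α ≤ weight n b β ↔ weight n b' α ≤ weight n b' β)) :
      inAlgebra K n b (A : Set (MvPowerSeries (Fin n) K)) ≤ inAlgebra K n b' A :=
    closedAdjoin_le <| by
      rintro _ ⟨f, hf, -, rfl⟩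
      exact initialForm_mem_inAlgebra_of_weight_le_iff hN h' hf
  exact le_antisymm (key a a' h) (key a' a fun α β hα hβ => (h α β hα hβ).symm)

end

theorem inAlgebra_finite
    (s : ℕ) (f : Fin s → MvPowerSeries (Fin n) K)
    (A : Subalgebra K (MvPowerSeries (Fin n) K)) (hA : A = closedAdjoin K n (Set.range f))
    (hlen : FiniteColength K n A) :
    {B : Subalgebra K (MvPowerSeries (Fin n) K) | ∃ a : Fin n → ℝ, (∀ i, 0 < a i) ∧
      B = inAlgebra K n a (A : Set (MvPowerSeries (Fin n) K))}.Finite := by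
  obtain ⟨N, hN⟩ := exists_mIdeal_pow_le_closedAdjoin (hA ▸ hlen)
  rw [← hA] at hN
  let T := {α : Fin n →₀ ℕ // α.degree < N}
  have : Finite T := (Finsupp.finite_of_degree_lt N).to_subtype
  have hfactor : Function.FactorsThrough (fun a => inAlgebra K n a (A : Set _))
      (fun a (q : T × T) => weight n a q.1 ≤ weight n a q.2) := fun a a' haa' =>
    inAlgebra_eq_of_weight_le_iff hN fun α β hα hβ => iff_of_eq (congrFun haa' (⟨α, hα⟩, ⟨β, hβ⟩))
  refine (Set.finite_range_of_factorsThrough hfactor (Set.toFinite _)).subset ?_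
  rintro B ⟨a, -, rfl⟩
  exact ⟨a, rfl⟩

end CanonicalFan
end
end

section
/- Let A = K[[f_1,…,f_s]] ⊆ F = K[[x_1,…,x_n]] with the length of F/A as an A-module finite, and let a, b ∈ (ℝ_{>0})^n with M(A,a) = M(A,b). If {g_1,…,g_r} is an a-reduced canonical basis of A, then M(g_i,a) = M(g_i,b) for all i ∈ {1,…,r}, and {g_1,…,g_r} is also a b-reduced canonical basis of A. -/
/-!
If `exp(g_i,b) ≠ exp(g_i,a)`, then `β = exp(g_i,b)` is still an exponent of `g_i - M(g_i,a)`.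
But `x^β` is a scalar multiple of `M(g_i,b) ∈ M(A,b) = M(A,a) = K[[M(g_1,a),…,M(g_r,a)]]`,
which reducedness forbids. So the `a`- and `b`-leading monomials of the `g_i` coincide, and all
the conditions for a `b`-reduced canonical basis become the `a`-ones.
-/

noncomputable section

namespace CanonicalFan

open MvPowerSeries

variable (K : Type*) [Field K] (n : ℕ)

theorem exists_forall_eq_or_rel_of_finite {α : Type*} (r : α → α → Prop)
    [IsStrictTotalOrder α r] {s : Set α} (hs : s.Finite) (hne : s.Nonempty) :
    ∃ β ∈ s, ∀ γ ∈ s, γ = β ∨ r γ β := by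
  classical
  let := linearOrderOfSTO r
  have hne' : hs.toFinset.Nonempty := by simpa using hne
  exact ⟨hs.toFinset.max' hne', by simpa using hs.toFinset.max'_mem hne',
    fun γ hγ => hs.toFinset.le_max' γ (by simpa using hγ)⟩

section

variable {K n}

theorem finite_setOf_weight_le {b : Fin n → ℝ} (hb : ∀ i, 0 < b i) (c : ℝ) :
    {α : Fin n →₀ ℕ | weight n b α ≤ c}.Finite := by
  refine (Set.finite_Iic (Finsupp.equivFunOnFinite.symm (fun i => ⌊c / b i⌋₊ : Fin n → ℕ))).subset ?_
  intro α hα i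
  have hterm : b i * (α i : ℝ) ≤ weight n b α :=
    Finset.single_le_sum (f := fun j => b j * (α j : ℝ))
      (fun j _ => mul_nonneg (hb j).le (Nat.cast_nonneg _)) (Finset.mem_univ i)
  show α i ≤ ⌊c / b i⌋₊
  refine Nat.le_floor ?_
  rw [le_div_iff₀ (hb i), mul_comm]
  exact hterm.trans hα

theorem exists_weight_eq_nu {b : Fin n → ℝ} (hb : ∀ i, 0 < b i)
    {f : MvPowerSeries (Fin n) K} (hf : f ≠ 0) :
    ∃ α ∈ supp K n f, (weight n b α : EReal) = nu K n b f := by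
  obtain ⟨α₀, hα₀⟩ := (ne_zero_iff_exists_coeff_ne_zero f).1 hf
  set T := {α ∈ supp K n f | weight n b α ≤ weight n b α₀}
  have hT : T.Finite := (finite_setOf_weight_le hb (weight n b α₀)).subset fun α hα => hα.2
  obtain ⟨α, hαT, hmin⟩ := Set.exists_min_image T (weight n b) hT ⟨α₀, hα₀, le_rfl⟩
  have hleast : ∀ γ ∈ supp K n f, weight n b α ≤ weight n b γ := fun γ hγ =>
    if h : weight n b γ ≤ weight n b α₀ then hmin γ ⟨hγ, h⟩
    else (hmin α₀ ⟨hα₀, le_rfl⟩).trans (le_of_not_ge h)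
  have hinf : IsLeast ((fun γ => (weight n b γ : EReal)) '' supp K n f) (weight n b α) := by
    refine ⟨⟨α, hαT.1, rfl⟩, ?_⟩
    rintro _ ⟨γ, hγ, rfl⟩
    exact EReal.coe_le_coe_iff.2 (hleast γ hγ)
  exact ⟨α, hαT.1, hinf.csInf_eq.symm⟩

theorem supp_initialForm (b : Fin n → ℝ) (f : MvPowerSeries (Fin n) K) :
    supp K n (initialForm K n b f) =
      {α ∈ supp K n f | (weight n b α : EReal) = nu K n b f} := by
  ext α
  have hcoeff : coeff α (initialForm K n b f) =
      if (weight n b α : EReal) = nu K n b f then coeff α f else 0 := rfl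
  simp only [supp, Set.mem_ofPred_eq, hcoeff]
  split_ifs <;> simp_all

theorem finite_supp_initialForm {b : Fin n → ℝ} (hb : ∀ i, 0 < b i)
    (f : MvPowerSeries (Fin n) K) : (supp K n (initialForm K n b f)).Finite := by
  rcases (supp K n (initialForm K n b f)).eq_empty_or_nonempty with h | ⟨α, hα⟩
  · simp [h]
  refine (finite_setOf_weight_le hb (weight n b α)).subset ?_
  rw [supp_initialForm] at hα ⊢
  rintro γ ⟨-, hγ⟩
  exact (EReal.coe_eq_coe_iff.1 (hγ.trans hα.2.symm)).le

theorem exponent_mem_supp_initialForm {r : (Fin n →₀ ℕ) → (Fin n →₀ ℕ) → Prop}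
    (hr : IsWellOrder (Fin n →₀ ℕ) r) {b : Fin n → ℝ} (hb : ∀ i, 0 < b i)
    {f : MvPowerSeries (Fin n) K} (hf : f ≠ 0) :
    exponent K n r b f ∈ supp K n (initialForm K n b f) := by
  have hne : (supp K n (initialForm K n b f)).Nonempty := by
    obtain ⟨α, hα, hnu⟩ := exists_weight_eq_nu hb hf
    exact ⟨α, (supp_initialForm b f).ge ⟨hα, hnu⟩⟩
  have hmax := exists_forall_eq_or_rel_of_finite r (finite_supp_initialForm hb f) hne
  rw [exponent, dif_pos hmax]
  exact hmax.choose_spec.1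

theorem exponent_mem_supp {r : (Fin n →₀ ℕ) → (Fin n →₀ ℕ) → Prop}
    (hr : IsWellOrder (Fin n →₀ ℕ) r) {b : Fin n → ℝ} (hb : ∀ i, 0 < b i)
    {f : MvPowerSeries (Fin n) K} (hf : f ≠ 0) :
    exponent K n r b f ∈ supp K n f := by
  have h := exponent_mem_supp_initialForm hr hb hf
  rw [supp_initialForm] at h
  exact h.1

theorem monomial_exponent_mem_leadAlgebra {r : (Fin n →₀ ℕ) → (Fin n →₀ ℕ) → Prop}
    (hr : IsWellOrder (Fin n →₀ ℕ) r) {b : Fin n → ℝ} (hb : ∀ i, 0 < b i)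
    {A : Set (MvPowerSeries (Fin n) K)} {f : MvPowerSeries (Fin n) K} (hfA : f ∈ A)
    (hf : f ≠ 0) : monomial (exponent K n r b f) (1 : K) ∈ leadAlgebra K n r b A := by
  have hc : coeff (exponent K n r b f) f ≠ 0 := exponent_mem_supp hr hb hf
  have hlead : leadMon K n r b f ∈ leadAlgebra K n r b A :=
    subset_closedAdjoin _ ⟨f, hfA, hf, rfl⟩
  have h := Subalgebra.smul_mem _ hlead (coeff (exponent K n r b f) f)⁻¹
  rwa [leadMon, ← map_smul, smul_eq_mul, inv_mul_cancel₀ hc] at h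

theorem leadMon_eq_of_exponent_eq {r : (Fin n →₀ ℕ) → (Fin n →₀ ℕ) → Prop}
    {a b : Fin n → ℝ} {f : MvPowerSeries (Fin n) K}
    (h : exponent K n r b f = exponent K n r a f) :
    leadMon K n r a f = leadMon K n r b f := by
  rw [leadMon, leadMon, h]

theorem exponent_eq_of_isReducedCanonicalBasis {r : (Fin n →₀ ℕ) → (Fin n →₀ ℕ) → Prop}
    (hr : IsWellOrder (Fin n →₀ ℕ) r) {a b : Fin n → ℝ} (hb : ∀ i, 0 < b i)
    {A : Subalgebra K (MvPowerSeries (Fin n) K)} {m : ℕ} {g : Fin m → MvPowerSeries (Fin n) K}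
    (hg : IsReducedCanonicalBasis K n r a A g)
    (hM : leadAlgebra K n r b (A : Set (MvPowerSeries (Fin n) K)) ≤
      leadAlgebra K n r a (A : Set (MvPowerSeries (Fin n) K)))
    (i : Fin m) : exponent K n r b (g i) = exponent K n r a (g i) := by
  obtain ⟨⟨⟨hmem, hCB⟩, -⟩, -, hred⟩ := hg
  by_contra hne
  set β := exponent K n r b (g i)
  have hβ : β ∈ supp K n (g i - leadMon K n r a (g i)) := by
    have hc : coeff β (g i) ≠ 0 := exponent_mem_supp hr hb (hmem i).2
    simpa [supp, leadMon, coeff_monomial_ne hne] using hc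
  refine hred i β hβ ?_
  rw [← hCB]
  exact hM (monomial_exponent_mem_leadAlgebra hr hb (hmem i).1 (hmem i).2)

theorem IsReducedCanonicalBasis.of_exponent_eq {r : (Fin n →₀ ℕ) → (Fin n →₀ ℕ) → Prop}
    {a b : Fin n → ℝ} {A : Subalgebra K (MvPowerSeries (Fin n) K)} {m : ℕ}
    {g : Fin m → MvPowerSeries (Fin n) K} (hg : IsReducedCanonicalBasis K n r a A g)
    (hM : leadAlgebra K n r a (A : Set (MvPowerSeries (Fin n) K)) =
      leadAlgebra K n r b (A : Set (MvPowerSeries (Fin n) K)))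
    (hexp : ∀ i, exponent K n r b (g i) = exponent K n r a (g i)) :
    IsReducedCanonicalBasis K n r b A g := by
  have hlead i : leadMon K n r b (g i) = leadMon K n r a (g i) :=
    (leadMon_eq_of_exponent_eq (hexp i)).symm
  simpa only [IsReducedCanonicalBasis, IsMinimalCanonicalBasis, IsCanonicalBasis, hlead, hexp,
    ← hM] using hg

end

theorem reducedCanonicalBasis_of_leadAlgebra_eq
    (r : (Fin n →₀ ℕ) → (Fin n →₀ ℕ) → Prop) (hr : IsWellOrder (Fin n →₀ ℕ) r)
    (A : Subalgebra K (MvPowerSeries (Fin n) K))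
    (a b : Fin n → ℝ) (hb : ∀ i, 0 < b i)
    (hM : leadAlgebra K n r a (A : Set (MvPowerSeries (Fin n) K)) =
      leadAlgebra K n r b (A : Set (MvPowerSeries (Fin n) K)))
    (m : ℕ) (g : Fin m → MvPowerSeries (Fin n) K)
    (hg : IsReducedCanonicalBasis K n r a A g) :
    (∀ i, leadMon K n r a (g i) = leadMon K n r b (g i)) ∧
      IsReducedCanonicalBasis K n r b A g := by
  have hexp := exponent_eq_of_isReducedCanonicalBasis hr hb hg hM.ge
  exact ⟨fun i => leadMon_eq_of_exponent_eq (hexp i), hg.of_exponent_eq hM hexp⟩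

end CanonicalFan
end
end

section
/- Let f be a nonzero element of F = K[[x_1,…,x_n]]. Then the set {in(f,a) : a ∈ (ℝ_{>0})^n} of a-initial forms of f is finite. -/
noncomputable section

namespace CanonicalFan

open MvPowerSeries

variable (K : Type*) [Field K] (n : ℕ)

/-
Every exponent in the support of `in(f,a)` is a minimal element of `Supp(f)` for the
componentwise order: a strictly smaller exponent has strictly smaller `a`-weight because all
`a i` are positive. By Dickson's lemma the minimal elements of `Supp(f)` form a finite
antichain, and `in(f,a)` is the restriction of `f` to a subset of it, so there are only finitely
many initial forms.
-/

theorem finite_setOf_minimal {α : Type*} [PartialOrder α] [WellQuasiOrderedLE α]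
    (P : α → Prop) : {x | Minimal P x}.Finite :=
  (setOfPred_minimal_antichain P).finite_of_partiallyWellOrderedOn
    (Set.isPWO_of_wellQuasiOrderedLE _)

open Classical in
def restrictSupport {σ R : Type*} [Semiring R] (S : Set (σ →₀ ℕ)) (f : MvPowerSeries σ R) :
    MvPowerSeries σ R :=
  fun α => if α ∈ S then MvPowerSeries.coeff α f else 0

theorem weight_lt_weight {a : Fin n → ℝ} (ha : ∀ i, 0 < a i) {α β : Fin n →₀ ℕ} (h : β < α) :
    weight n a β < weight n a α := by
  obtain ⟨j, hj⟩ : ∃ j, β j < α j := by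
    by_contra! hle
    exact h.ne (le_antisymm h.le fun i => hle i)
  refine Finset.sum_lt_sum (fun i _ => ?_) ⟨j, Finset.mem_univ j, ?_⟩
  · exact mul_le_mul_of_nonneg_left (Nat.cast_le.2 (h.le i)) (ha i).le
  · exact mul_lt_mul_of_pos_left (Nat.cast_lt.2 hj) (ha j)

theorem nu_le_weight {a : Fin n → ℝ} {f : MvPowerSeries (Fin n) K} {α : Fin n →₀ ℕ}
    (hα : α ∈ supp K n f) : nu K n a f ≤ weight n a α :=
  sInf_le ⟨α, hα, rfl⟩

theorem mem_supp_initialForm {a : Fin n → ℝ} {f : MvPowerSeries (Fin n) K} {α : Fin n →₀ ℕ} :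
    α ∈ supp K n (initialForm K n a f) ↔
      α ∈ supp K n f ∧ ((weight n a α : ℝ) : EReal) = nu K n a f := by
  change (ite _ _ _ ≠ (0 : K)) ↔ _
  split_ifs with h
  · exact ⟨fun hc => ⟨hc, h⟩, And.left⟩
  · exact ⟨fun hc => absurd rfl hc, fun hc => absurd hc.2 h⟩

theorem initialForm_eq_restrictSupport (a : Fin n → ℝ) (f : MvPowerSeries (Fin n) K) :
    initialForm K n a f = restrictSupport (supp K n (initialForm K n a f)) f := by
  classical
  ext α
  by_cases hα : α ∈ supp K n (initialForm K n a f)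
  · change ite _ _ _ = ite _ _ _
    rw [if_pos (mem_supp_initialForm K n |>.1 hα).2, if_pos hα]
  · change _ = ite _ _ _
    rw [if_neg hα]
    exact not_not.1 hα

theorem minimal_of_mem_supp_initialForm {a : Fin n → ℝ} (ha : ∀ i, 0 < a i)
    {f : MvPowerSeries (Fin n) K} {α : Fin n →₀ ℕ} (hα : α ∈ supp K n (initialForm K n a f)) :
    Minimal (· ∈ supp K n f) α := by
  obtain ⟨hαf, hνα⟩ := mem_supp_initialForm K n |>.1 hα
  refine minimal_iff_forall_lt.2 ⟨hαf, fun β hβα hβf => ?_⟩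
  have hνβ : nu K n a f ≤ weight n a β := nu_le_weight K n hβf
  rw [← hνα] at hνβ
  exact (EReal.coe_lt_coe_iff.2 (weight_lt_weight n ha hβα)).not_ge hνβ

theorem initialForm_finite
    (f : MvPowerSeries (Fin n) K) :
    {g : MvPowerSeries (Fin n) K | ∃ a : Fin n → ℝ, (∀ i, 0 < a i) ∧
      initialForm K n a f = g}.Finite := by
  refine ((finite_setOf_minimal (· ∈ supp K n f)).finite_subsets.image
    (restrictSupport · f)).subset ?_
  rintro _ ⟨a, ha, rfl⟩
  exact ⟨_, fun α hα => minimal_of_mem_supp_initialForm K n ha hα,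
    (initialForm_eq_restrictSupport K n a f).symm⟩

end CanonicalFan
end
end
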